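/- arXiv:1709.01024 — 2 statements merged into one kernel-verified Lean document; each statement's English description precedes it below -/
import Mathlib

section
/- Let π* be a Nash equilibrium such that for every off-path signal s': if J̃(s',π*) ≠ ∅, then every action in the support of π₂*(·|s') is a best response BR(p,s') to some belief p ∈ Δ(Θ) satisfying (i) p(θ) = 0 for every θ ∉ J̃(s',π*) and (ii) p(θ'')·λ(θ') ≤ λ(θ'')·p(θ') for every pair (θ',θ'') with D(θ'',s';π*) ∪ D°(θ'',s';π*) ⊆ D(θ',s';π*); and if J̃(s',π*) = ∅, then every action in the support of π₂*(·|s') is a best response to some belief supported on Θ_{s'}. Then π* is a rationality-compatible equilibrium (RCE). (In particular, every divine equilibrium is an RCE.) -/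
open scoped Classical
open Finset Filter

noncomputable section

/-- `p` is a probability distribution on the finite type `X`. -/
def IsDist {X : Type*} [Fintype X] (p : X → ℝ) : Prop :=
  (∀ x, 0 ≤ p x) ∧ ∑ x, p x = 1

variable {Θ S A : Type*} [Fintype Θ] [Fintype S] [Fintype A]

/-- Sender's expected payoff `u₁(θ, s, π₂(·|s))` from signal `s` when the receiver plays `π₂`. -/
def u1R (u₁ : Θ → S → A → ℝ) (π₂ : S → A → ℝ) (θ : Θ) (s : S) : ℝ :=
  ∑ a, π₂ s a * u₁ θ s a

/-- Receiver's expected payoff of action `a` after signal `s` under belief `p`. -/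
def expU2 (u₂ : Θ → S → A → ℝ) (p : Θ → ℝ) (s : S) (a : A) : ℝ :=
  ∑ θ, p θ * u₂ θ s a

/-- `BR(p, s)`: pure best responses to belief `p` after signal `s`. -/
def BRb (u₂ : Θ → S → A → ℝ) (p : Θ → ℝ) (s : S) : Set A :=
  {a | ∀ a', expU2 u₂ p s a' ≤ expU2 u₂ p s a}

/-- `A_s^BR`: actions that best respond to some belief after `s`. -/
def ABR (u₂ : Θ → S → A → ℝ) (s : S) : Set A :=
  {a | ∃ p, IsDist p ∧ a ∈ BRb u₂ p s}

/-- Membership in `Π₂•`: a receiver behavior strategy supported on `A_s^BR` after every `s`. -/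
def Rational2 (u₂ : Θ → S → A → ℝ) (π₂ : S → A → ℝ) : Prop :=
  (∀ s, IsDist (π₂ s)) ∧ ∀ s a, π₂ s a ≠ 0 → a ∈ ABR u₂ s

/-- `u₁(θ,s,π₂(·|s)) ≥ max_{s' ≠ s} u₁(θ,s',π₂(·|s'))`. -/
def WeakBest (u₁ : Θ → S → A → ℝ) (π₂ : S → A → ℝ) (θ : Θ) (s : S) : Prop :=
  ∀ s', s' ≠ s → u1R u₁ π₂ θ s' ≤ u1R u₁ π₂ θ s

/-- `u₁(θ,s,π₂(·|s)) > max_{s' ≠ s} u₁(θ,s',π₂(·|s'))`. -/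
def StrictBest (u₁ : Θ → S → A → ℝ) (π₂ : S → A → ℝ) (θ : Θ) (s : S) : Prop :=
  ∀ s', s' ≠ s → u1R u₁ π₂ θ s' < u1R u₁ π₂ θ s

/-- `θ' ≿_s θ''`: `s` is more rationally-compatible with `θ'` than with `θ''`. -/
def MoreCompat (u₁ u₂ : Θ → S → A → ℝ) (s : S) (θ' θ'' : Θ) : Prop :=
  ∀ π₂, Rational2 u₂ π₂ → WeakBest u₁ π₂ θ'' s → StrictBest u₁ π₂ θ' s

/-- `s` maximizes `s' ↦ u₁(θ, s', π₂(·|s'))`. -/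
def GlobalBest (u₁ : Θ → S → A → ℝ) (π₂ : S → A → ℝ) (θ : Θ) (s : S) : Prop :=
  ∀ s', u1R u₁ π₂ θ s' ≤ u1R u₁ π₂ θ s

/-- `S_θ`: signals that best respond to some (not necessarily rational) receiver strategy. -/
def Sθ (u₁ : Θ → S → A → ℝ) (θ : Θ) : Set S :=
  {s | ∃ π₂ : S → A → ℝ, (∀ s', IsDist (π₂ s')) ∧ GlobalBest u₁ π₂ θ s}

/-- `Θ_s`: types for which `s` is not dominated. -/
def Θtypes (u₁ : Θ → S → A → ℝ) (s : S) : Set Θ := {θ | s ∈ Sθ u₁ θ}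

/-- Membership in `Π₁•`. -/
def Rational1 (u₁ : Θ → S → A → ℝ) (π₁ : Θ → S → ℝ) : Prop :=
  (∀ θ, IsDist (π₁ θ)) ∧ ∀ θ s, π₁ θ s ≠ 0 → s ∈ Sθ u₁ θ

/-- Nash equilibrium of the signaling game. -/
def NashEq (lam : Θ → ℝ) (u₁ u₂ : Θ → S → A → ℝ)
    (π₁ : Θ → S → ℝ) (π₂ : S → A → ℝ) : Prop :=
  (∀ θ, IsDist (π₁ θ)) ∧ (∀ s, IsDist (π₂ s)) ∧
  (∀ θ s, π₁ θ s ≠ 0 → GlobalBest u₁ π₂ θ s) ∧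
  (∀ s, (∃ θ, π₁ θ s ≠ 0) → ∀ a, π₂ s a ≠ 0 →
    ∀ a', ∑ θ, lam θ * π₁ θ s * u₂ θ s a' ≤ ∑ θ, lam θ * π₁ θ s * u₂ θ s a)

/-- Equilibrium expected payoff `E_π[u₁ | θ]`. -/
def eqPayoff (u₁ : Θ → S → A → ℝ) (π₁ : Θ → S → ℝ) (π₂ : S → A → ℝ) (θ : Θ) : ℝ :=
  ∑ s, π₁ θ s * u1R u₁ π₂ θ s

/-- `s` is off the path of play of `π₁`. -/
def OffPath (π₁ : Θ → S → ℝ) (s : S) : Prop := ∀ θ, π₁ θ s = 0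

/-- `J̃(s, π)`: types for which some best response to `s` weakly improves on the equilibrium. -/
def Jt (u₁ u₂ : Θ → S → A → ℝ) (π₁ : Θ → S → ℝ) (π₂ : S → A → ℝ) (s : S) : Set Θ :=
  {θ | ∃ a ∈ ABR u₂ s, eqPayoff u₁ π₁ π₂ θ ≤ u₁ θ s a}

/-- The odds-ratio condition defining `P_{θ'▷θ''}`. -/
def OddsLe (lam : Θ → ℝ) (θ' θ'' : Θ) (p : Θ → ℝ) : Prop :=
  p θ'' * lam θ' ≤ lam θ'' * p θ'

/-- `Δ(T)`: beliefs supported on `T`. -/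
def DeltaOn {Θ : Type*} [Fintype Θ] (T : Set Θ) : Set (Θ → ℝ) :=
  {p | IsDist p ∧ ∀ θ ∉ T, p θ = 0}

/-- `P̃(s, π)`: rationality-compatible beliefs at profile `π`. -/
def Pt (lam : Θ → ℝ) (u₁ u₂ : Θ → S → A → ℝ) (π₁ : Θ → S → ℝ) (π₂ : S → A → ℝ)
    (s : S) : Set (Θ → ℝ) :=
  if (Jt u₁ u₂ π₁ π₂ s).Nonempty then
    DeltaOn (Jt u₁ u₂ π₁ π₂ s) ∩
      {p | ∀ θ' θ'', MoreCompat u₁ u₂ s θ' θ'' → OddsLe lam θ' θ'' p}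
  else DeltaOn (Θtypes u₁ s)

/-- Rationality-compatible equilibrium. -/
def RCE (lam : Θ → ℝ) (u₁ u₂ : Θ → S → A → ℝ)
    (π₁ : Θ → S → ℝ) (π₂ : S → A → ℝ) : Prop :=
  NashEq lam u₁ u₂ π₁ π₂ ∧
  ∀ s a, π₂ s a ≠ 0 → ∃ p ∈ Pt lam u₁ u₂ π₁ π₂ s, a ∈ BRb u₂ p s

/-- `P̂(s)`: uniformly rationality-compatible beliefs. -/
def Ph (lam : Θ → ℝ) (u₁ u₂ : Θ → S → A → ℝ) (s : S) : Set (Θ → ℝ) :=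
  DeltaOn (Θtypes u₁ s) ∩
    {p | ∀ θ' θ'', MoreCompat u₁ u₂ s θ' θ'' → OddsLe lam θ' θ'' p}

/-- Uniform rationality-compatible equilibrium. -/
def URCE (lam : Θ → ℝ) (u₁ u₂ : Θ → S → A → ℝ)
    (π₁ : Θ → S → ℝ) (π₂ : S → A → ℝ) : Prop :=
  NashEq lam u₁ u₂ π₁ π₂ ∧
  ∀ θ s, OffPath π₁ s → ∀ a, (∃ p ∈ Ph lam u₁ u₂ s, a ∈ BRb u₂ p s) →
    u₁ θ s a ≤ eqPayoff u₁ π₁ π₂ θ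

/-- Receiver's expected payoff of a mixed action `α` after `s` under belief `p`. -/
def expU2m (u₂ : Θ → S → A → ℝ) (p : Θ → ℝ) (s : S) (α : A → ℝ) : ℝ :=
  ∑ θ, p θ * ∑ a, α a * u₂ θ s a

/-- `MBR(p, s)`: mixed best responses to belief `p` after `s`. -/
def MBRb (u₂ : Θ → S → A → ℝ) (p : Θ → ℝ) (s : S) : Set (A → ℝ) :=
  {α | IsDist α ∧ ∀ α', IsDist α' → expU2m u₂ p s α' ≤ expU2m u₂ p s α}

/-- `MBR(s)`. -/
def MBR (u₂ : Θ → S → A → ℝ) (s : S) : Set (A → ℝ) :=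
  {α | ∃ p, IsDist p ∧ α ∈ MBRb u₂ p s}

/-- `u₁(θ, s, α)` for a mixed action `α`. -/
def u1m (u₁ : Θ → S → A → ℝ) (θ : Θ) (s : S) (α : A → ℝ) : ℝ :=
  ∑ a, α a * u₁ θ s a

/-- `D(θ, s; π)`. -/
def Dset (u₁ u₂ : Θ → S → A → ℝ) (π₁ : Θ → S → ℝ) (π₂ : S → A → ℝ)
    (θ : Θ) (s : S) : Set (A → ℝ) :=
  {α | α ∈ MBR u₂ s ∧ eqPayoff u₁ π₁ π₂ θ < u1m u₁ θ s α}

/-- `D°(θ, s; π)`. -/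
def D0set (u₁ u₂ : Θ → S → A → ℝ) (π₁ : Θ → S → ℝ) (π₂ : S → A → ℝ)
    (θ : Θ) (s : S) : Set (A → ℝ) :=
  {α | α ∈ MBR u₂ s ∧ eqPayoff u₁ π₁ π₂ θ = u1m u₁ θ s α}

end

/-!
First, `π₂*` lies in `Π₂•`: on path it best responds to the Bayesian posterior, off path to
the beliefs supplied by the hypothesis.

On path, the posterior is a belief in `P̃(s, π*)`: every type that sends `s` gets its
equilibrium payoff there, so some action in the support of `π₂*(·|s)` puts it in `J̃(s, π*)`;
and if `θ' ≿_s θ''` while `θ''` sends `s`, then `s` is weakly optimal for `θ''` against `π₂*`,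
hence strictly optimal for `θ'`, so `θ'` sends `s` with probability one and the posterior odds
favour `θ'`.

Off path, `≿_s` refines the divinity order. If `θ' ≿_s θ''` and a mixed best response `α` gives
`θ''` at least its equilibrium payoff, then the receiver strategy playing `α` after `s` and
`π₂*` elsewhere is rational and makes `s` weakly optimal for `θ''`, hence strictly optimal for
`θ'`; comparing with a signal `θ'` sends in equilibrium gives `α ∈ D(θ', s; π*)`.
-/

namespace IsDist

variable {X : Type*} [Fintype X] {w : X → ℝ}

lemma exists_ne_zero (h : IsDist w) : ∃ x, w x ≠ 0 := by
  by_contra! h0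
  simpa [h0] using h.2

lemma le_one (h : IsDist w) (x : X) : w x ≤ 1 :=
  h.2 ▸ Finset.single_le_sum (fun y _ => h.1 y) (Finset.mem_univ x)

lemma eq_one_of_forall_ne (h : IsDist w) {x : X} (hx : ∀ y ≠ x, w y = 0) : w x = 1 := by
  rw [← h.2, Finset.sum_eq_single x (fun y _ hy => hx y hy) (by simp)]

lemma exists_ne_zero_sum_mul_le (h : IsDist w) (v : X → ℝ) :
    ∃ x, w x ≠ 0 ∧ ∑ y, w y * v y ≤ v x := by
  by_contra! hlt
  obtain ⟨x₀, hx₀⟩ := h.exists_ne_zero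
  have : ∑ y, w y * v y < ∑ y, w y * ∑ z, w z * v z := by
    refine Finset.sum_lt_sum (fun y _ => ?_) ⟨x₀, Finset.mem_univ _, ?_⟩
    · by_cases hy : w y = 0
      · simp [hy]
      · exact mul_le_mul_of_nonneg_left (hlt y hy).le (h.1 y)
    · exact mul_lt_mul_of_pos_left (hlt x₀ hx₀) ((h.1 x₀).lt_of_ne' hx₀)
  rw [← Finset.sum_mul, h.2, one_mul] at this
  exact this.false

lemma apply_eq_of_le_sum_mul (h : IsDist w) {v : X → ℝ} {M : ℝ} (hv : ∀ x, v x ≤ M)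
    (hM : M ≤ ∑ x, w x * v x) {x : X} (hx : w x ≠ 0) : v x = M := by
  have hterm : ∀ y ∈ Finset.univ, 0 ≤ w y * (M - v y) :=
    fun y _ => mul_nonneg (h.1 y) (sub_nonneg.2 (hv y))
  have hsum : ∑ y, w y * (M - v y) = 0 := by
    have : ∑ y, w y * (M - v y) = M - ∑ y, w y * v y := by
      simp only [mul_sub, Finset.sum_sub_distrib, ← Finset.sum_mul, h.2, one_mul]
    linarith [Finset.sum_nonneg hterm]
  have := (Finset.sum_eq_zero_iff_of_nonneg hterm).1 hsum x (Finset.mem_univ x)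
  linarith [(mul_eq_zero.1 this).resolve_left hx]

lemma ite_eq (a : X) : IsDist fun x => if x = a then (1 : ℝ) else 0 := by
  refine ⟨fun x => ?_, by simp⟩
  dsimp only
  split_ifs <;> norm_num

end IsDist

section Receiver

variable {Θ S A : Type*} {u₂ : Θ → S → A → ℝ}

lemma expU2m_eq_sum [Fintype Θ] [Fintype A] (p : Θ → ℝ) (s : S) (α : A → ℝ) :
    expU2m u₂ p s α = ∑ a, α a * expU2 u₂ p s a := by
  simp only [expU2m, expU2, Finset.mul_sum]
  rw [Finset.sum_comm]
  exact Finset.sum_congr rfl fun _ _ => Finset.sum_congr rfl fun _ _ => by ring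

lemma mem_BRb_of_mem_MBRb [Fintype Θ] [Fintype A] {p : Θ → ℝ} {s : S} {α : A → ℝ}
    (hα : α ∈ MBRb u₂ p s) {a : A} (ha : α a ≠ 0) : a ∈ BRb u₂ p s := by
  have : Nonempty A := ⟨a⟩
  obtain ⟨b, -, hb⟩ :=
    Finset.exists_max_image Finset.univ (expU2 u₂ p s) Finset.univ_nonempty
  have hmax : ∀ a', expU2 u₂ p s a' ≤ expU2 u₂ p s b := fun a' => hb a' (Finset.mem_univ a')
  have hb_le : expU2 u₂ p s b ≤ ∑ a', α a' * expU2 u₂ p s a' := by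
    simpa [expU2m_eq_sum, ite_mul] using hα.2 _ (IsDist.ite_eq b)
  intro a'
  rw [hα.1.apply_eq_of_le_sum_mul hmax hb_le ha]
  exact hmax a'

lemma Rational2.update [Fintype Θ] [Fintype A] {π₂ : S → A → ℝ} (h : Rational2 u₂ π₂)
    {s : S} {α : A → ℝ} (hα : α ∈ MBR u₂ s) : Rational2 u₂ (Function.update π₂ s α) := by
  obtain ⟨p, hp, hαp⟩ := hα
  constructor
  · intro t
    rcases eq_or_ne t s with rfl | ht
    · simpa using hαp.1
    · simpa [ht] using h.1 t
  · intro t a ha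
    rcases eq_or_ne t s with rfl | ht
    · simp only [Function.update_self] at ha
      exact ⟨p, hp, mem_BRb_of_mem_MBRb hαp ha⟩
    · simp only [Function.update_of_ne ht] at ha
      exact h.2 t a ha

lemma u1R_update_self [Fintype A] {u₁ : Θ → S → A → ℝ} {π₂ : S → A → ℝ} {θ : Θ} {s : S}
    (α : A → ℝ) : u1R u₁ (Function.update π₂ s α) θ s = u1m u₁ θ s α := by
  simp [u1R, u1m]

lemma u1R_update_of_ne [Fintype A] {u₁ : Θ → S → A → ℝ} {π₂ : S → A → ℝ} {θ : Θ} {s t : S}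
    (ht : t ≠ s) (α : A → ℝ) : u1R u₁ (Function.update π₂ s α) θ t = u1R u₁ π₂ θ t := by
  simp [u1R, ht]

/-- Bayes' rule (with junk value `0` when `s` is off path). -/
noncomputable def posterior [Fintype Θ] (lam : Θ → ℝ) (π₁ : Θ → S → ℝ) (s : S) (θ : Θ) : ℝ :=
  lam θ * π₁ θ s / ∑ θ', lam θ' * π₁ θ' s

variable [Fintype Θ] {lam : Θ → ℝ} {π₁ : Θ → S → ℝ} {s : S}

lemma isDist_posterior (hlam : ∀ θ, 0 < lam θ) (hπ₁ : ∀ θ, 0 ≤ π₁ θ s)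
    (hs : ∃ θ, π₁ θ s ≠ 0) : IsDist (posterior lam π₁ s) := by
  obtain ⟨θ₀, hθ₀⟩ := hs
  have hZ : 0 < ∑ θ, lam θ * π₁ θ s :=
    Finset.sum_pos' (fun θ _ => mul_nonneg (hlam θ).le (hπ₁ θ))
      ⟨θ₀, Finset.mem_univ _, mul_pos (hlam θ₀) ((hπ₁ θ₀).lt_of_ne' hθ₀)⟩
  refine ⟨fun θ => div_nonneg (mul_nonneg (hlam θ).le (hπ₁ θ)) hZ.le, ?_⟩
  simp only [posterior, ← Finset.sum_div, div_self hZ.ne']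

lemma mem_BRb_posterior [Fintype A] (hlam : ∀ θ, 0 ≤ lam θ) (hπ₁ : ∀ θ, 0 ≤ π₁ θ s) {a : A}
    (ha : ∀ a', ∑ θ, lam θ * π₁ θ s * u₂ θ s a' ≤ ∑ θ, lam θ * π₁ θ s * u₂ θ s a) :
    a ∈ BRb u₂ (posterior lam π₁ s) s := by
  have hZ : 0 ≤ ∑ θ, lam θ * π₁ θ s := Finset.sum_nonneg fun θ _ => mul_nonneg (hlam θ) (hπ₁ θ)
  have hexp : ∀ b, expU2 u₂ (posterior lam π₁ s) s b =
      (∑ θ, lam θ * π₁ θ s * u₂ θ s b) / ∑ θ, lam θ * π₁ θ s := by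
    intro b
    simp only [expU2, posterior, Finset.sum_div]
    exact Finset.sum_congr rfl fun _ _ => by ring
  intro a'
  rw [hexp, hexp]
  exact div_le_div_of_nonneg_right (ha a') hZ

lemma oddsLe_posterior (hlam : ∀ θ, 0 ≤ lam θ) (hπ₁ : ∀ θ, 0 ≤ π₁ θ s) {θ' θ'' : Θ}
    (h : π₁ θ'' s ≤ π₁ θ' s) : OddsLe lam θ' θ'' (posterior lam π₁ s) := by
  have hZ : 0 ≤ ∑ θ, lam θ * π₁ θ s := Finset.sum_nonneg fun θ _ => mul_nonneg (hlam θ) (hπ₁ θ)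
  unfold OddsLe posterior
  rw [div_mul_eq_mul_div, mul_div_assoc']
  refine div_le_div_of_nonneg_right ?_ hZ
  calc lam θ'' * π₁ θ'' s * lam θ' = lam θ'' * lam θ' * π₁ θ'' s := by ring
    _ ≤ lam θ'' * lam θ' * π₁ θ' s :=
      mul_le_mul_of_nonneg_left h (mul_nonneg (hlam θ'') (hlam θ'))
    _ = lam θ'' * (lam θ' * π₁ θ' s) := by ring

end Receiver

section Sender

variable {Θ S A : Type*} [Fintype S] [Fintype A] {u₁ : Θ → S → A → ℝ} {π₁ : Θ → S → ℝ}
  {π₂ : S → A → ℝ} {θ : Θ} {s : S}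

lemma eqPayoff_eq_u1R (hθ : IsDist (π₁ θ)) (hbest : ∀ t, π₁ θ t ≠ 0 → GlobalBest u₁ π₂ θ t)
    (hs : π₁ θ s ≠ 0) : eqPayoff u₁ π₁ π₂ θ = u1R u₁ π₂ θ s := by
  have hval : ∀ t, π₁ θ t * u1R u₁ π₂ θ t = π₁ θ t * u1R u₁ π₂ θ s := by
    intro t
    by_cases ht : π₁ θ t = 0
    · simp [ht]
    · rw [le_antisymm (hbest s hs t) (hbest t ht s)]
  rw [eqPayoff, Finset.sum_congr rfl fun t _ => hval t, ← Finset.sum_mul, hθ.2, one_mul]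

lemma u1R_le_eqPayoff (hθ : IsDist (π₁ θ)) (hbest : ∀ t, π₁ θ t ≠ 0 → GlobalBest u₁ π₂ θ t)
    (t : S) : u1R u₁ π₂ θ t ≤ eqPayoff u₁ π₁ π₂ θ := by
  obtain ⟨s, hs⟩ := hθ.exists_ne_zero
  rw [eqPayoff_eq_u1R hθ hbest hs]
  exact hbest s hs t

lemma eq_one_of_strictBest (hθ : IsDist (π₁ θ))
    (hbest : ∀ t, π₁ θ t ≠ 0 → GlobalBest u₁ π₂ θ t) (h : StrictBest u₁ π₂ θ s) :
    π₁ θ s = 1 :=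
  hθ.eq_one_of_forall_ne fun t ht => by
    by_contra hne
    exact (h t ht).not_ge (hbest t hne s)

variable [Fintype Θ] {u₂ : Θ → S → A → ℝ}

lemma mem_Jt_of_ne_zero (hR : Rational2 u₂ π₂) (hθ : IsDist (π₁ θ))
    (hbest : ∀ t, π₁ θ t ≠ 0 → GlobalBest u₁ π₂ θ t) (hs : π₁ θ s ≠ 0) :
    θ ∈ Jt u₁ u₂ π₁ π₂ s := by
  obtain ⟨a, ha, hle⟩ := (hR.1 s).exists_ne_zero_sum_mul_le (u₁ θ s)
  exact ⟨a, hR.2 s a ha, (eqPayoff_eq_u1R hθ hbest hs).trans_le hle⟩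

variable {θ' θ'' : Θ}

lemma MoreCompat.signal_prob_le (hc : MoreCompat u₁ u₂ s θ' θ'') (hR : Rational2 u₂ π₂)
    (hπ₁ : ∀ θ, IsDist (π₁ θ)) (hbest : ∀ θ t, π₁ θ t ≠ 0 → GlobalBest u₁ π₂ θ t) :
    π₁ θ'' s ≤ π₁ θ' s := by
  by_cases hs : π₁ θ'' s = 0
  · exact hs ▸ (hπ₁ θ').1 s
  · rw [eq_one_of_strictBest (hπ₁ θ') (hbest θ') (hc π₂ hR fun t _ => hbest θ'' s hs t)]
    exact (hπ₁ θ'').le_one s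

lemma MoreCompat.lt_u1m (hc : MoreCompat u₁ u₂ s θ' θ'') (hR : Rational2 u₂ π₂)
    (hπ₁ : ∀ θ, IsDist (π₁ θ)) (hbest : ∀ θ t, π₁ θ t ≠ 0 → GlobalBest u₁ π₂ θ t)
    (hoff : OffPath π₁ s) {α : A → ℝ} (hα : α ∈ MBR u₂ s)
    (h : eqPayoff u₁ π₁ π₂ θ'' ≤ u1m u₁ θ'' s α) : eqPayoff u₁ π₁ π₂ θ' < u1m u₁ θ' s α := by
  have hweak : WeakBest u₁ (Function.update π₂ s α) θ'' s := fun t ht => by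
    rw [u1R_update_of_ne ht, u1R_update_self]
    exact (u1R_le_eqPayoff (hπ₁ θ'') (hbest θ'') t).trans h
  obtain ⟨t, ht⟩ := (hπ₁ θ').exists_ne_zero
  have hts : t ≠ s := fun h => ht (h ▸ hoff θ')
  calc eqPayoff u₁ π₁ π₂ θ' = u1R u₁ π₂ θ' t := eqPayoff_eq_u1R (hπ₁ θ') (hbest θ') ht
    _ = u1R u₁ (Function.update π₂ s α) θ' t := (u1R_update_of_ne hts α).symm
    _ < u1R u₁ (Function.update π₂ s α) θ' s := hc _ (hR.update hα) hweak t hts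
    _ = u1m u₁ θ' s α := u1R_update_self α

lemma MoreCompat.Dset_union_D0set_subset (hc : MoreCompat u₁ u₂ s θ' θ'')
    (hR : Rational2 u₂ π₂) (hπ₁ : ∀ θ, IsDist (π₁ θ))
    (hbest : ∀ θ t, π₁ θ t ≠ 0 → GlobalBest u₁ π₂ θ t) (hoff : OffPath π₁ s) :
    Dset u₁ u₂ π₁ π₂ θ'' s ∪ D0set u₁ u₂ π₁ π₂ θ'' s ⊆ Dset u₁ u₂ π₁ π₂ θ' s := by
  rintro α (⟨hα, hlt⟩ | ⟨hα, heq⟩)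
  · exact ⟨hα, hc.lt_u1m hR hπ₁ hbest hoff hα hlt.le⟩
  · exact ⟨hα, hc.lt_u1m hR hπ₁ hbest hoff hα heq.le⟩

lemma posterior_mem_Pt {lam : Θ → ℝ} (hlam : ∀ θ, 0 < lam θ) (hR : Rational2 u₂ π₂)
    (hπ₁ : ∀ θ, IsDist (π₁ θ)) (hbest : ∀ θ t, π₁ θ t ≠ 0 → GlobalBest u₁ π₂ θ t)
    (hon : ∃ θ, π₁ θ s ≠ 0) : posterior lam π₁ s ∈ Pt lam u₁ u₂ π₁ π₂ s := by
  have hJ : ∀ θ, π₁ θ s ≠ 0 → θ ∈ Jt u₁ u₂ π₁ π₂ s :=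
    fun θ => mem_Jt_of_ne_zero hR (hπ₁ θ) (hbest θ)
  obtain ⟨θ₀, hθ₀⟩ := hon
  rw [Pt, if_pos ⟨θ₀, hJ θ₀ hθ₀⟩]
  refine ⟨⟨isDist_posterior hlam (fun θ => (hπ₁ θ).1 s) ⟨θ₀, hθ₀⟩, fun θ hθ => ?_⟩,
    fun θ' θ'' hc => ?_⟩
  · simp [posterior, not_imp_comm.1 (hJ θ) hθ]
  · exact oddsLe_posterior (fun θ => (hlam θ).le) (fun θ => (hπ₁ θ).1 s)
      (hc.signal_prob_le hR hπ₁ hbest)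

end Sender

section

variable {Θ S A : Type*} [Fintype Θ] [Fintype S] [Fintype A]

theorem divine_is_RCE_general
    (lam : Θ → ℝ) (hpos : ∀ θ, 0 < lam θ)
    (u₁ u₂ : Θ → S → A → ℝ) (π₁ : Θ → S → ℝ) (π₂ : S → A → ℝ)
    (hN : NashEq lam u₁ u₂ π₁ π₂)
    (hdiv : ∀ s', OffPath π₁ s' →
      (((Jt u₁ u₂ π₁ π₂ s').Nonempty →
        ∀ a, π₂ s' a ≠ 0 → ∃ p : Θ → ℝ, IsDist p ∧
          (∀ θ, θ ∉ Jt u₁ u₂ π₁ π₂ s' → p θ = 0) ∧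
          (∀ θ' θ'', Dset u₁ u₂ π₁ π₂ θ'' s' ∪ D0set u₁ u₂ π₁ π₂ θ'' s'
              ⊆ Dset u₁ u₂ π₁ π₂ θ' s' →
            p θ'' * lam θ' ≤ lam θ'' * p θ') ∧
          a ∈ BRb u₂ p s') ∧
      (¬ (Jt u₁ u₂ π₁ π₂ s').Nonempty →
        ∀ a, π₂ s' a ≠ 0 → ∃ p ∈ DeltaOn (Θtypes u₁ s'), a ∈ BRb u₂ p s'))) :
    RCE lam u₁ u₂ π₁ π₂ := by
  obtain ⟨hπ₁, hπ₂, hbest, hbr⟩ := hN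
  have hon : ∀ s, ¬OffPath π₁ s → ∃ θ, π₁ θ s ≠ 0 := fun _ => not_forall.1
  have hpost_BR : ∀ s, ¬OffPath π₁ s → ∀ a, π₂ s a ≠ 0 → a ∈ BRb u₂ (posterior lam π₁ s) s :=
    fun s hs a ha => mem_BRb_posterior (fun θ => (hpos θ).le) (fun θ => (hπ₁ θ).1 s)
      (hbr s (hon s hs) a ha)
  have hR : Rational2 u₂ π₂ := by
    refine ⟨hπ₂, fun s a ha => ?_⟩
    by_cases hoff : OffPath π₁ s
    · by_cases hJ : (Jt u₁ u₂ π₁ π₂ s).Nonempty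
      · obtain ⟨p, hp, -, -, hpa⟩ := (hdiv s hoff).1 hJ a ha
        exact ⟨p, hp, hpa⟩
      · obtain ⟨p, hp, hpa⟩ := (hdiv s hoff).2 hJ a ha
        exact ⟨p, hp.1, hpa⟩
    · exact ⟨_, isDist_posterior hpos (fun θ => (hπ₁ θ).1 s) (hon s hoff), hpost_BR s hoff a ha⟩
  refine ⟨⟨hπ₁, hπ₂, hbest, hbr⟩, fun s a ha => ?_⟩
  by_cases hoff : OffPath π₁ s
  · by_cases hJ : (Jt u₁ u₂ π₁ π₂ s).Nonempty
    · obtain ⟨p, hp, hsupp, hodds, hpa⟩ := (hdiv s hoff).1 hJ a ha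
      refine ⟨p, ?_, hpa⟩
      rw [Pt, if_pos hJ]
      exact ⟨⟨hp, hsupp⟩, fun θ' θ'' hc =>
        hodds θ' θ'' (hc.Dset_union_D0set_subset hR hπ₁ hbest hoff)⟩
    · obtain ⟨p, hp, hpa⟩ := (hdiv s hoff).2 hJ a ha
      exact ⟨p, by rwa [Pt, if_neg hJ], hpa⟩
  · exact ⟨_, posterior_mem_Pt hpos hR hπ₁ hbest (hon s hoff), hpost_BR s hoff a ha⟩

/-- a Nash equilibrium whose off-path responses best respond to beliefs that
put zero weight on equilibrium-dominated types and whose odds ratios respect the inclusion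
`D(θ'',s';π*) ∪ D°(θ'',s';π*) ⊆ D(θ',s';π*)` (the divinity restriction) is an RCE. -/
theorem divine_is_RCE [Nonempty Θ] [Nonempty A] (hS : 1 < Fintype.card S)
    (lam : Θ → ℝ) (hpos : ∀ θ, 0 < lam θ) (hsum : ∑ θ, lam θ = 1)
    (u₁ u₂ : Θ → S → A → ℝ) (π₁ : Θ → S → ℝ) (π₂ : S → A → ℝ)
    (hN : NashEq lam u₁ u₂ π₁ π₂)
    (hdiv : ∀ s', OffPath π₁ s' →
      (((Jt u₁ u₂ π₁ π₂ s').Nonempty →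
        ∀ a, π₂ s' a ≠ 0 → ∃ p : Θ → ℝ, IsDist p ∧
          (∀ θ, θ ∉ Jt u₁ u₂ π₁ π₂ s' → p θ = 0) ∧
          (∀ θ' θ'', Dset u₁ u₂ π₁ π₂ θ'' s' ∪ D0set u₁ u₂ π₁ π₂ θ'' s'
              ⊆ Dset u₁ u₂ π₁ π₂ θ' s' →
            p θ'' * lam θ' ≤ lam θ'' * p θ') ∧
          a ∈ BRb u₂ p s') ∧
      (¬ (Jt u₁ u₂ π₁ π₂ s').Nonempty →
        ∀ a, π₂ s' a ≠ 0 → ∃ p ∈ DeltaOn (Θtypes u₁ s'), a ∈ BRb u₂ p s'))) :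
    RCE lam u₁ u₂ π₁ π₂ :=
  divine_is_RCE_general lam hpos u₁ u₂ π₁ π₂ hN hdiv

end
end

section
/- If π* is a Nash equilibrium, then for every signal s, J̃(s,π*) ⊆ Θ_s; consequently, whenever J̃(s,π*) ≠ ∅, P̃(s,π*) ⊆ P̂(s). -/
open scoped Classical
open Finset Filter

noncomputable section

variable {Θ S A : Type*} [Fintype Θ] [Fintype S] [Fintype A]

lemma le_sum_mul_of_maximizes_on_support {X : Type*} [Fintype X] {σ f : X → ℝ}
    (hσ : IsDist σ) (hmax : ∀ x, σ x ≠ 0 → ∀ y, f y ≤ f x) (y : X) :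
    f y ≤ ∑ x, σ x * f x :=
  calc f y = ∑ x, σ x * f y := by rw [← sum_mul, hσ.2, one_mul]
    _ ≤ ∑ x, σ x * f x := sum_le_sum fun x _ => by
      by_cases hx : σ x = 0
      · simp [hx]
      · exact mul_le_mul_of_nonneg_left (hmax x hx y) (hσ.1 x)

lemma isDist_pi_single {X : Type*} [Fintype X] (x : X) : IsDist (Pi.single x (1 : ℝ)) :=
  ⟨fun y => by by_cases h : y = x <;> simp [h], by simp⟩

lemma DeltaOn_mono {T T' : Set Θ} (h : T ⊆ T') : DeltaOn T ⊆ DeltaOn T' :=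
  fun _ ⟨hp, hsupp⟩ => ⟨hp, fun θ hθ => hsupp θ fun hT => hθ (h hT)⟩

/-- Witness: the receiver strategy that answers `s` with the pure action `a` and otherwise
follows `π₂`. -/
lemma mem_Θtypes_of_forall_u1R_le {Θ S A : Type*} [Fintype A] {u₁ : Θ → S → A → ℝ} {π₂ : S → A → ℝ}
    (hπ₂ : ∀ s, IsDist (π₂ s)) {θ : Θ} {s : S} {a : A}
    (hle : ∀ s', s' ≠ s → u1R u₁ π₂ θ s' ≤ u₁ θ s a) : θ ∈ Θtypes u₁ s := by
  refine ⟨Function.update π₂ s (Pi.single a 1), fun s' => ?_, fun s' => ?_⟩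
  · rcases eq_or_ne s' s with rfl | hs'
    · simpa using isDist_pi_single a
    · simpa [hs'] using hπ₂ s'
  · have hself : u1R u₁ (Function.update π₂ s (Pi.single a 1)) θ s = u₁ θ s a := by
      simp [u1R, Pi.single_apply]
    rcases eq_or_ne s' s with rfl | hs'
    · exact le_rfl
    · have hother : u1R u₁ (Function.update π₂ s (Pi.single a 1)) θ s' = u1R u₁ π₂ θ s' := by
        simp [u1R, hs']
      rw [hother, hself]
      exact hle s' hs'

namespace NashEq

variable {lam : Θ → ℝ} {u₁ u₂ : Θ → S → A → ℝ} {π₁ : Θ → S → ℝ} {π₂ : S → A → ℝ}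

lemma u1R_le_eqPayoff (hN : NashEq lam u₁ u₂ π₁ π₂) (θ : Θ) (s : S) :
    u1R u₁ π₂ θ s ≤ eqPayoff u₁ π₁ π₂ θ :=
  le_sum_mul_of_maximizes_on_support (hN.1 θ) (hN.2.2.1 θ) s

lemma Jt_subset_Θtypes (hN : NashEq lam u₁ u₂ π₁ π₂) (s : S) :
    Jt u₁ u₂ π₁ π₂ s ⊆ Θtypes u₁ s := fun θ ⟨_, _, ha⟩ =>
  mem_Θtypes_of_forall_u1R_le hN.2.1 fun s' _ => (hN.u1R_le_eqPayoff θ s').trans ha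

end NashEq

theorem Jt_subset_Θtypes_and_Pt_subset_Ph_general
    (lam : Θ → ℝ)
    (u₁ u₂ : Θ → S → A → ℝ) (π₁ : Θ → S → ℝ) (π₂ : S → A → ℝ)
    (hN : NashEq lam u₁ u₂ π₁ π₂) :
    ∀ s : S, Jt u₁ u₂ π₁ π₂ s ⊆ Θtypes u₁ s ∧
      ((Jt u₁ u₂ π₁ π₂ s).Nonempty →
        Pt lam u₁ u₂ π₁ π₂ s ⊆ Ph lam u₁ u₂ s) := by
  intro s
  have hJ := hN.Jt_subset_Θtypes s
  refine ⟨hJ, fun hne => ?_⟩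
  rw [Pt, if_pos hne]
  exact Set.inter_subset_inter_left _ (DeltaOn_mono hJ)

/-- at a Nash equilibrium, `J̃(s,π*) ⊆ Θ_s` for every signal `s`; consequently,
whenever `J̃(s,π*)` is nonempty, `P̃(s,π*) ⊆ P̂(s)`. -/
theorem Jt_subset_Θtypes_and_Pt_subset_Ph [Nonempty Θ] [Nonempty A]
    (hS : 1 < Fintype.card S)
    (lam : Θ → ℝ) (hpos : ∀ θ, 0 < lam θ) (hsum : ∑ θ, lam θ = 1)
    (u₁ u₂ : Θ → S → A → ℝ) (π₁ : Θ → S → ℝ) (π₂ : S → A → ℝ)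
    (hN : NashEq lam u₁ u₂ π₁ π₂) :
    ∀ s : S, Jt u₁ u₂ π₁ π₂ s ⊆ Θtypes u₁ s ∧
      ((Jt u₁ u₂ π₁ π₂ s).Nonempty →
        Pt lam u₁ u₂ π₁ π₂ s ⊆ Ph lam u₁ u₂ s) :=
  Jt_subset_Θtypes_and_Pt_subset_Ph_general lam u₁ u₂ π₁ π₂ hN
end
end
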